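/- arXiv:1503.07095 — 2 statements merged into one kernel-verified Lean document; each statement's English description precedes it below -/
import Mathlib

section
/- Let E be an infinite-dimensional closed *-subalgebra of s (closed in the topology of s, closed under pointwise multiplication and complex conjugation). Then there exists a family {N_k}_{k∈ℕ} of finite nonempty pairwise disjoint subsets of ℕ such that E = {ξ ∈ s : ξ_i = ξ_j whenever i, j ∈ N_k for some k, and ξ_j = 0 for every j ∉ ⋃_{k∈ℕ} N_k}; in particular each e_{N_k} belongs to E and E is the closed linear span of {e_{N_k} : k ∈ ℕ}. -/
/-!
For `ξ ∈ E` the sequence `|ξ|² = ξ̄ ξ` lies in `E` and tends to `0`, so only finitely many of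
its values exceed half of a given value `a > 0`. Polynomials without constant term that equal
`1` at `a`, vanish at those finitely many values and are `O(2⁻ᵐ x)` on `[0, a/2]`, evaluated at
`|ξ|²`, converge in every norm of `s` to the indicator of the level set `{|ξ|² = a}`; since `E` is
closed, that indicator lies in `E`. Intersecting such level sets shows that every class of the
relation `i ∼ j ↔ ∀ ξ ∈ E, ξ i = ξ j` on which `E` does not vanish identically is finite, with
indicator in `E`. These classes are the `N_k`: there are infinitely many because `E` is
infinite-dimensional, and the truncations of `ξ` to finitely many classes converge to `ξ`.
-/

noncomputable section

/-- Membership in the space `s` of rapidly decreasing sequences (the paper's index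
`j ∈ {1,2,...}` corresponds to `j+1` here). -/
def inS (ξ : ℕ → ℂ) : Prop :=
  ∀ q : ℕ, Summable fun j : ℕ => ‖ξ j‖ ^ 2 * ((j : ℝ) + 1) ^ (2 * q)

/-- The `q`-th norm `|ξ|_q` on `s`. -/
def sNorm (q : ℕ) (ξ : ℕ → ℂ) : ℝ :=
  Real.sqrt (∑' j : ℕ, ‖ξ j‖ ^ 2 * ((j : ℝ) + 1) ^ (2 * q))

/-- The characteristic sequence `e_N` of a set `N ⊆ ℕ`. -/
def eNset (N : Finset ℕ) : ℕ → ℂ := fun j => if j ∈ N then 1 else 0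

open Filter Topology Polynomial

def IsSClosed (E : Set (ℕ → ℂ)) : Prop :=
  ∀ ξ : ℕ → ℂ, inS ξ → (∀ q : ℕ, ∀ ε : ℝ, 0 < ε → ∃ η ∈ E, sNorm q (ξ - η) < ε) → ξ ∈ E

lemma inS_eNset (N : Finset ℕ) : inS (eNset N) := fun _ =>
  summable_of_ne_finset_zero (s := N) fun j hj => by simp [eNset, hj]

lemma eNset_inter (K L : Finset ℕ) : eNset (K ∩ L) = eNset K * eNset L := by
  ext j
  by_cases hK : j ∈ K <;> by_cases hL : j ∈ L <;> simp [eNset, hK, hL]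

lemma finite_setOf_le_norm {ξ : ℕ → ℂ} (hξ : inS ξ) {δ : ℝ} (hδ : 0 < δ) :
    {j | δ ≤ ‖ξ j‖}.Finite := by
  have h : Tendsto (fun j => ‖ξ j‖ ^ 2) cofinite (𝓝 0) := by
    simpa using (hξ 0).tendsto_cofinite_zero
  exact (eventually_cofinite.1 (h.eventually (gt_mem_nhds (pow_pos hδ 2)))).subset
    fun j hj => not_lt.2 (pow_le_pow_left₀ hδ.le hj 2)

lemma tendsto_sNorm_of_dominated {f : ℕ → ℕ → ℂ} {ζ : ℕ → ℂ} (hζ : inS ζ) {c : ℝ}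
    (hbound : ∀ m j, ‖f m j‖ ≤ c * ‖ζ j‖) (hlim : ∀ j, Tendsto (fun m => f m j) atTop (𝓝 0))
    (q : ℕ) : Tendsto (fun m => sNorm q (f m)) atTop (𝓝 0) := by
  have hsum : Tendsto (fun m => ∑' j, ‖f m j‖ ^ 2 * ((j : ℝ) + 1) ^ (2 * q)) atTop (𝓝 0) := by
    refine (tendsto_tsum_of_dominated_convergence ((hζ q).mul_left (c ^ 2))
      (fun j => ((hlim j).norm.pow 2).mul_const _) (Eventually.of_forall fun m j => ?_)).trans ?_
    · rw [Real.norm_of_nonneg (by positivity), ← mul_assoc, ← mul_pow]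
      gcongr
      exact hbound m j
    · simp
  simpa [sNorm, Function.comp_def] using (Real.continuous_sqrt.tendsto 0).comp hsum

lemma IsSClosed.mem_of_tendsto {E : Set (ℕ → ℂ)} (hE : IsSClosed E) {ξ : ℕ → ℂ} (hξ : inS ξ)
    {η : ℕ → ℕ → ℂ} (hηE : ∀ m, η m ∈ E)
    (hlim : ∀ q, Tendsto (fun m => sNorm q (ξ - η m)) atTop (𝓝 0)) : ξ ∈ E :=
  hE ξ hξ fun q _ hε =>
    let ⟨m, hm⟩ := ((hlim q).eventually (gt_mem_nhds hε)).exists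
    ⟨η m, hηE m, hm⟩

theorem aeval_mem_of_coeff_zero {R B : Type*} [CommSemiring R] [Semiring B] [Algebra R B]
    (A : NonUnitalSubalgebra R B) {x : B} (hx : x ∈ A) {P : R[X]} (hP : P.coeff 0 = 0) :
    aeval x P ∈ A := by
  have hpow : ∀ n, x ^ (n + 1) ∈ A := fun n => by
    induction n with
    | zero => simpa using hx
    | succ n ih => simpa [pow_succ] using mul_mem ih hx
  rw [aeval_eq_sum_range]
  refine sum_mem fun n _ => ?_
  rcases n with _ | n
  · simp [hP]
  · exact SMulMemClass.smul_mem _ (hpow n)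

theorem exists_peak_polynomials {a : ℝ} (ha : 0 < a) (V : Finset ℝ)
    (hV : ∀ v ∈ V, a / 2 ≤ v ∧ v ≠ a) :
    ∃ (P : ℕ → ℝ[X]) (c : ℝ), 0 ≤ c ∧ (∀ m, (P m).eval a = 1) ∧
      (∀ m, ∀ v ∈ V, (P m).eval v = 0) ∧
      ∀ m x, 0 ≤ x → x ≤ a / 2 → |(P m).eval x| ≤ c * (1 / 2) ^ m * x := by
  have hav : ∀ v ∈ V, a - v ≠ 0 := fun v hv => sub_ne_zero.2 (hV v hv).2.symm
  refine ⟨fun m => (C a⁻¹ * X) ^ (m + 1) * ∏ v ∈ V, C (a - v)⁻¹ * (X - C v),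
    a⁻¹ * ∏ v ∈ V, |a - v|⁻¹ * v, ?_, fun m => ?_, fun m v hv => ?_, fun m x hx0 hxa => ?_⟩
  · exact mul_nonneg (inv_nonneg.2 ha.le) (Finset.prod_nonneg fun v hv =>
      mul_nonneg (inv_nonneg.2 (abs_nonneg _)) (by linarith [(hV v hv).1]))
  · simp [eval_prod, inv_mul_cancel₀ ha.ne',
      Finset.prod_eq_one fun v hv => inv_mul_cancel₀ (hav v hv)]
  · simp [eval_prod, Finset.prod_eq_zero hv]
  · have hxv : ∀ v ∈ V, |a - v|⁻¹ * |x - v| ≤ |a - v|⁻¹ * v := fun v hv => by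
      have := (hV v hv).1
      gcongr
      rw [abs_of_nonpos (by linarith)]
      linarith
    have hpow : (a⁻¹ * x) ^ (m + 1) ≤ a⁻¹ * x * (1 / 2) ^ m := by
      rw [pow_succ']
      gcongr
      rw [inv_mul_le_iff₀ ha]
      linarith
    have hprod : |∏ v ∈ V, (a - v)⁻¹ * (x - v)| ≤ ∏ v ∈ V, |a - v|⁻¹ * v := by
      rw [Finset.abs_prod]
      refine Finset.prod_le_prod (fun v _ => abs_nonneg _) fun v hv => ?_
      rw [abs_mul, abs_inv]
      exact hxv v hv
    simp only [eval_mul, eval_pow, eval_C, eval_X, eval_prod, eval_sub]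
    rw [abs_mul, abs_of_nonneg (by positivity)]
    calc (a⁻¹ * x) ^ (m + 1) * |∏ v ∈ V, (a - v)⁻¹ * (x - v)|
        ≤ a⁻¹ * x * (1 / 2) ^ m * ∏ v ∈ V, |a - v|⁻¹ * v :=
          mul_le_mul hpow hprod (abs_nonneg _) (by positivity)
      _ = a⁻¹ * (∏ v ∈ V, |a - v|⁻¹ * v) * (1 / 2) ^ m * x := by ring

theorem exists_tendsto_sNorm_sub_mem_span {N : ℕ → Finset ℕ}
    (hdisj : ∀ k l, k ≠ l → Disjoint (N k) (N l)) {ξ : ℕ → ℂ} (hξ : inS ξ)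
    (hconst : ∀ k, ∀ i ∈ N k, ∀ j ∈ N k, ξ i = ξ j) (hvan : ∀ j, (∀ k, j ∉ N k) → ξ j = 0) :
    ∃ η : ℕ → ℕ → ℂ, (∀ n, η n ∈ Submodule.span ℂ (Set.range fun k => eNset (N k))) ∧
      ∀ q, Tendsto (fun n => sNorm q (ξ - η n)) atTop (𝓝 0) := by
  classical
  have hspan : ∀ k, ξ * eNset (N k) ∈ Submodule.span ℂ (Set.range fun k => eNset (N k)) := by
    intro k
    rcases (N k).eq_empty_or_nonempty with hk | ⟨i, hi⟩
    · rw [hk, show eNset ∅ = 0 from funext fun j => by simp [eNset], mul_zero]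
      exact zero_mem _
    · rw [show ξ * eNset (N k) = ξ i • eNset (N k) from funext fun j => by
        by_cases hj : j ∈ N k
        · simp [eNset, hj, hconst k i hi j hj]
        · simp [eNset, hj]]
      exact Submodule.smul_mem _ _ (Submodule.subset_span ⟨k, rfl⟩)
  have htrunc : ∀ n j, (ξ - ∑ k ∈ Finset.range n, ξ * eNset (N k)) j =
      if ∃ k < n, j ∈ N k then 0 else ξ j := by
    intro n j
    simp only [Pi.sub_apply, Finset.sum_apply, Pi.mul_apply]
    split_ifs with h
    · obtain ⟨k₀, hk₀n, hjk₀⟩ := h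
      rw [Finset.sum_eq_single_of_mem k₀ (Finset.mem_range.2 hk₀n), sub_eq_zero]
      · simp [eNset, hjk₀]
      · intro k _ hk
        simp [eNset, Finset.disjoint_left.1 (hdisj k₀ k hk.symm) hjk₀]
    · simp only [not_exists, not_and] at h
      rw [Finset.sum_eq_zero fun k hk => by simp [eNset, h k (Finset.mem_range.1 hk)], sub_zero]
  refine ⟨fun n => ∑ k ∈ Finset.range n, ξ * eNset (N k), fun n => sum_mem fun k _ => hspan k,
    fun q => tendsto_sNorm_of_dominated hξ (c := 1) (fun n j => ?_) (fun j => ?_) q⟩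
  · rw [htrunc]
    split_ifs <;> simp
  · by_cases h : ∃ k, j ∈ N k
    · obtain ⟨k₀, hk₀⟩ := h
      refine tendsto_const_nhds.congr' ((eventually_gt_atTop k₀).mono fun n hn => ?_)
      exact ((htrunc n j).trans (if_pos ⟨k₀, hn, hk₀⟩)).symm
    · simp_rw [htrunc, hvan j (not_exists.1 h), ite_self]
      exact tendsto_const_nhds

section ClosedStarSubalgebra

variable {A : NonUnitalStarSubalgebra ℂ (ℕ → ℂ)}

theorem eval_comp_mem {w : ℕ → ℝ} (hwA : (fun j => (w j : ℂ)) ∈ A) {P : ℝ[X]}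
    (hP : P.eval 0 = 0) : (fun j => ((P.eval (w j) : ℝ) : ℂ)) ∈ A := by
  have hcoeff : (P.map (algebraMap ℝ ℂ)).coeff 0 = 0 := by
    rw [coeff_map, coeff_zero_eq_eval_zero, hP, map_zero]
  suffices (fun j => ((P.eval (w j) : ℝ) : ℂ)) =
      aeval (fun j => (w j : ℂ)) (P.map (algebraMap ℝ ℂ)) from
    this ▸ aeval_mem_of_coeff_zero A.toNonUnitalSubalgebra hwA hcoeff
  ext j
  change _ = Pi.evalAlgHom ℂ (fun _ => ℂ) j (aeval _ _)
  rw [← aeval_algHom_apply, aeval_map_algebraMap]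
  exact (aeval_algebraMap_apply_eq_algebraMap_eval (w j) P).symm

theorem exists_eNset_level_mem (hAs : ∀ ξ ∈ A, inS ξ) (hA : IsSClosed A) {w : ℕ → ℝ}
    (hw0 : ∀ j, 0 ≤ w j) (hwA : (fun j => (w j : ℂ)) ∈ A) {a : ℝ} (ha : 0 < a) :
    ∃ L : Finset ℕ, (∀ j, j ∈ L ↔ w j = a) ∧ eNset L ∈ A := by
  classical
  have hnorm : ∀ j, ‖(w j : ℂ)‖ = w j := fun j => by simp [abs_of_nonneg (hw0 j)]
  have hB := finite_setOf_le_norm (hAs _ hwA) (half_pos ha)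
  set B := hB.toFinset
  have hBmem : ∀ j, j ∈ B ↔ a / 2 ≤ w j := fun j => by
    simp [B, abs_of_nonneg (hw0 j)]
  obtain ⟨P, c, hc, hPa, hPV, hPsmall⟩ := exists_peak_polynomials ha ((B.image w).erase a)
    fun v hv => by
      obtain ⟨hva, j, hj, rfl⟩ : v ≠ a ∧ ∃ j ∈ B, w j = v := by simpa using hv
      exact ⟨(hBmem j).1 hj, hva⟩
  set L := B.filter (w · = a)
  have hL : ∀ j, j ∈ L ↔ w j = a := fun j => by
    simp only [L, Finset.mem_filter, hBmem, and_iff_right_iff_imp]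
    intro h
    linarith
  refine ⟨L, hL, ?_⟩
  set f : ℕ → ℕ → ℂ := fun m j => (((P m).eval (w j) : ℝ) : ℂ)
  have hfA : ∀ m, f m ∈ A := fun m => eval_comp_mem hwA
    (abs_nonpos_iff.1 (by simpa using hPsmall m 0 le_rfl (by linarith)))
  have hbound : ∀ m j, ‖(eNset L - f m) j‖ ≤ c * (1 / 2) ^ m * ‖(w j : ℂ)‖ := fun m j => by
    have hRHS : 0 ≤ c * (1 / 2) ^ m * w j := by have := hw0 j; positivity
    rw [hnorm]
    by_cases hja : w j = a
    · rw [show (eNset L - f m) j = 0 by simp [eNset, f, hL, hja, hPa], norm_zero]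
      exact hRHS
    rw [Pi.sub_apply, show eNset L j = 0 by simp [eNset, hL, hja], zero_sub, norm_neg]
    simp only [f, Complex.norm_real, Real.norm_eq_abs]
    by_cases hjB : a / 2 ≤ w j
    · rw [hPV m _ (Finset.mem_erase.2 ⟨hja, Finset.mem_image_of_mem w ((hBmem j).2 hjB)⟩),
        abs_zero]
      exact hRHS
    · exact hPsmall m _ (hw0 j) (by linarith)
  refine hA.mem_of_tendsto (inS_eNset L) hfA fun q =>
    tendsto_sNorm_of_dominated (hAs _ hwA) (c := c) (fun m j => (hbound m j).trans ?_)
      (fun j => squeeze_zero_norm (hbound · j) ?_) q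
  · gcongr
    exact mul_le_of_le_one_right hc (pow_le_one₀ (by norm_num) (by norm_num))
  · simpa using ((tendsto_pow_atTop_nhds_zero_of_lt_one (r := (1 / 2 : ℝ)) (by norm_num)
      (by norm_num)).const_mul c).mul_const ‖(w j : ℂ)‖

theorem exists_eNset_norm_level_mem (hAs : ∀ ξ ∈ A, inS ξ) (hA : IsSClosed A) {θ : ℕ → ℂ}
    (hθ : θ ∈ A) {c : ℝ} (hc : 0 < c) :
    ∃ L : Finset ℕ, (∀ j, j ∈ L ↔ ‖θ j‖ = c) ∧ eNset L ∈ A := by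
  have hθθ : (fun j => ((‖θ j‖ ^ 2 : ℝ) : ℂ)) ∈ A := by
    convert mul_mem (star_mem hθ) hθ using 1
    ext j
    simp [Complex.conj_mul']
  obtain ⟨L, hL, hLA⟩ := exists_eNset_level_mem hAs hA (fun j => sq_nonneg _) hθθ (pow_pos hc 2)
  exact ⟨L, fun j => (hL j).trans (pow_left_inj₀ (norm_nonneg _) hc.le two_ne_zero), hLA⟩

variable (A) in
def classOf (i : ℕ) : Set ℕ := {j | ∀ ξ ∈ A, ξ j = ξ i}

lemma mem_classOf_self (i : ℕ) : i ∈ classOf A i := fun _ _ => rfl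

lemma classOf_eq_of_mem {i j : ℕ} (h : j ∈ classOf A i) : classOf A j = classOf A i :=
  Set.ext fun _ =>
    ⟨fun hk ξ hξ => (hk ξ hξ).trans (h ξ hξ), fun hk ξ hξ => (hk ξ hξ).trans (h ξ hξ).symm⟩

theorem exists_eNset_eq_classOf (hAs : ∀ ξ ∈ A, inS ξ) (hA : IsSClosed A) {ξ : ℕ → ℂ}
    (hξ : ξ ∈ A) {i : ℕ} (hi : ξ i ≠ 0) :
    ∃ K : Finset ℕ, (K : Set ℕ) = classOf A i ∧ eNset K ∈ A := by
  classical
  have hlevel : ∀ θ ∈ A, θ i ≠ 0 → ∃ L : Finset ℕ,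
      classOf A i ⊆ L ∧ (∀ j ∈ L, ‖θ j‖ = ‖θ i‖) ∧ eNset L ∈ A := fun θ hθ hθi => by
    obtain ⟨L, hL, hLA⟩ := exists_eNset_norm_level_mem hAs hA hθ (norm_pos_iff.2 hθi)
    exact ⟨L, fun j hj => (hL j).2 (by rw [hj θ hθ]), fun j => (hL j).1, hLA⟩
  obtain ⟨L₀, hL₀, -, hL₀A⟩ := hlevel ξ hξ hi
  obtain ⟨K, ⟨hCK, hKA⟩, hmin⟩ := (measure Finset.card).wf.has_min
    {K : Finset ℕ | classOf A i ⊆ K ∧ eNset K ∈ A} ⟨L₀, hL₀, hL₀A⟩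
  refine ⟨K, Set.Subset.antisymm (fun j hjK => ?_) hCK, hKA⟩
  by_contra hj
  obtain ⟨η, hη, hne⟩ : ∃ η ∈ A, η j ≠ η i := by simpa [classOf] using hj
  -- `θ` vanishes at `j` but not at `i`, and is constant on the class of `i`.
  set θ := ξ * η - η j • ξ
  have hθ : ∀ k, θ k = ξ k * (η k - η j) := fun k => by simp [θ]; ring
  obtain ⟨L, hCL, hL, hLA⟩ := hlevel θ (sub_mem (mul_mem hξ hη) (SMulMemClass.smul_mem _ hξ))
    (by rw [hθ]; exact mul_ne_zero hi (sub_ne_zero.2 hne.symm))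
  have hjL : j ∉ L := fun hjL => by
    have := hL j hjL
    simp [hθ, hi, sub_eq_zero, hne.symm] at this
  exact hmin (K ∩ L)
    ⟨Finset.coe_inter K L ▸ Set.subset_inter hCK hCL, eNset_inter K L ▸ mul_mem hKA hLA⟩
    (Finset.card_lt_card ((Finset.ssubset_iff_of_subset Finset.inter_subset_left).2
      ⟨j, hjK, fun h => hjL (Finset.mem_inter.1 h).2⟩))

variable (A) in
def jointSupport : Set ℕ := {i | ∃ ξ ∈ A, ξ i ≠ 0}

variable (A) in
def classFinsets : Set (Finset ℕ) := {K | eNset K ∈ A ∧ ∃ i, (K : Set ℕ) = classOf A i}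

lemma disjoint_of_mem_classFinsets {K L : Finset ℕ} (hK : K ∈ classFinsets A)
    (hL : L ∈ classFinsets A) (hKL : K ≠ L) : Disjoint K L := by
  obtain ⟨-, i, hi⟩ := hK
  obtain ⟨-, i', hi'⟩ := hL
  refine Finset.disjoint_left.2 fun j hjK hjL => hKL (Finset.coe_injective ?_)
  rw [hi, hi', ← classOf_eq_of_mem (hi ▸ hjK : j ∈ classOf A i),
    classOf_eq_of_mem (hi' ▸ hjL : j ∈ classOf A i')]

lemma exists_mem_classFinsets (hAs : ∀ ξ ∈ A, inS ξ) (hA : IsSClosed A) {i : ℕ}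
    (hi : i ∈ jointSupport A) : ∃ K ∈ classFinsets A, i ∈ K := by
  obtain ⟨ξ, hξ, hξi⟩ := hi
  obtain ⟨K, hK, hKA⟩ := exists_eNset_eq_classOf hAs hA hξ hξi
  exact ⟨K, ⟨hKA, i, hK⟩, by simpa [← Finset.mem_coe, hK] using mem_classOf_self i⟩

lemma infinite_jointSupport (hinf : ¬ ∃ t : Finset (ℕ → ℂ),
      (A : Set (ℕ → ℂ)) ⊆ (Submodule.span ℂ (t : Set (ℕ → ℂ)) : Set (ℕ → ℂ))) :
    (jointSupport A).Infinite := by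
  classical
  intro hfin
  refine hinf ⟨hfin.toFinset.image fun j => Pi.single j 1, fun ξ hξ => ?_⟩
  have hξ_eq : ξ = ∑ j ∈ hfin.toFinset, ξ j • Pi.single j 1 := by
    ext k
    by_cases hk : k ∈ jointSupport A
    · simp [Finset.sum_apply, Pi.single_apply, hk]
    · have hξk : ξ k = 0 := not_not.1 fun h => hk ⟨ξ, hξ, h⟩
      simp [Finset.sum_apply, Pi.single_apply, hk, hξk]
  rw [hξ_eq]
  exact sum_mem fun j hj => Submodule.smul_mem _ _
    (Submodule.subset_span (Finset.mem_coe.2 (Finset.mem_image_of_mem _ hj)))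

lemma infinite_classFinsets (hAs : ∀ ξ ∈ A, inS ξ) (hA : IsSClosed A)
    (hinf : ¬ ∃ t : Finset (ℕ → ℂ),
      (A : Set (ℕ → ℂ)) ⊆ (Submodule.span ℂ (t : Set (ℕ → ℂ)) : Set (ℕ → ℂ))) :
    (classFinsets A).Infinite := by
  intro hfin
  refine infinite_jointSupport hinf
    ((hfin.biUnion fun K _ => K.finite_toSet).subset fun i hi => ?_)
  obtain ⟨K, hK, hiK⟩ := exists_mem_classFinsets hAs hA hi
  exact Set.mem_biUnion hK hiK

theorem exists_classes_enumeration (hAs : ∀ ξ ∈ A, inS ξ) (hA : IsSClosed A)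
    (hinf : ¬ ∃ t : Finset (ℕ → ℂ),
      (A : Set (ℕ → ℂ)) ⊆ (Submodule.span ℂ (t : Set (ℕ → ℂ)) : Set (ℕ → ℂ))) :
    ∃ N : ℕ → Finset ℕ, (∀ k, (N k).Nonempty) ∧ (∀ k l, k ≠ l → Disjoint (N k) (N l)) ∧
      (∀ k, eNset (N k) ∈ A) ∧ ∀ ξ ∈ A, (∀ k, ∀ i ∈ N k, ∀ j ∈ N k, ξ i = ξ j) ∧
        ∀ j, (∀ k, j ∉ N k) → ξ j = 0 := by
  have : Infinite (classFinsets A) := (infinite_classFinsets hAs hA hinf).to_subtype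
  obtain ⟨_⟩ := nonempty_denumerable (classFinsets A)
  set e := (Denumerable.eqv (classFinsets A)).symm
  have hN : ∀ k, (e k : Finset ℕ) ∈ classFinsets A := fun k => (e k).2
  refine ⟨fun k => e k, fun k => ?_, fun k l hkl => ?_, fun k => (hN k).1, fun ξ hξ => ⟨?_, ?_⟩⟩
  · obtain ⟨-, i, hi⟩ := hN k
    exact ⟨i, by simpa [← Finset.mem_coe, hi] using mem_classOf_self i⟩
  · exact disjoint_of_mem_classFinsets (hN k) (hN l)
      fun h => hkl (e.injective (Subtype.ext h))
  · intro k i hi j hj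
    obtain ⟨-, i₀, hi₀⟩ := hN k
    rw [← Finset.mem_coe, hi₀] at hi hj
    exact (hi ξ hξ).trans (hj ξ hξ).symm
  · intro j hj
    by_contra hξj
    obtain ⟨K, hK, hjK⟩ := exists_mem_classFinsets hAs hA ⟨ξ, hξ, hξj⟩
    exact hj (e.symm ⟨K, hK⟩) (by simpa using hjK)

end ClosedStarSubalgebra

/-- Let `E` be an infinite-dimensional closed *-subalgebra of `s`. Then there is a family
`{N_k}` of finite nonempty pairwise disjoint subsets of `ℕ` such that `E` consists exactly
of those `ξ ∈ s` that are constant on each `N_k` and vanish off `⋃_k N_k`; in particular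
each `e_{N_k} ∈ E` and `E` is the closed linear span of `{e_{N_k} : k ∈ ℕ}`. -/
theorem stmt_6 (E : Set (ℕ → ℂ))
    (hEsub : ∀ ξ ∈ E, inS ξ)
    (hadd : ∀ ξ ∈ E, ∀ η ∈ E, ξ + η ∈ E)
    (hsmul : ∀ (c : ℂ), ∀ ξ ∈ E, c • ξ ∈ E)
    (hmul : ∀ ξ ∈ E, ∀ η ∈ E, ξ * η ∈ E)
    (hstar : ∀ ξ ∈ E, star ξ ∈ E)
    (hclosed : ∀ ξ : ℕ → ℂ, inS ξ →
      (∀ q : ℕ, ∀ ε : ℝ, 0 < ε → ∃ η ∈ E, sNorm q (ξ - η) < ε) → ξ ∈ E)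
    (hinfdim : ¬ ∃ t : Finset (ℕ → ℂ),
      E ⊆ (Submodule.span ℂ (t : Set (ℕ → ℂ)) : Set (ℕ → ℂ))) :
    ∃ N : ℕ → Finset ℕ, (∀ k, (N k).Nonempty) ∧
      (∀ k l, k ≠ l → Disjoint (N k) (N l)) ∧
      E = {ξ : ℕ → ℂ | inS ξ ∧ (∀ k, ∀ i ∈ N k, ∀ j ∈ N k, ξ i = ξ j) ∧
            (∀ j : ℕ, (∀ k, j ∉ N k) → ξ j = 0)} ∧
      (∀ k, eNset (N k) ∈ E) ∧
      E = {ξ : ℕ → ℂ | inS ξ ∧ ∀ q : ℕ, ∀ ε : ℝ, 0 < ε →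
            ∃ η ∈ (Submodule.span ℂ (Set.range fun k => eNset (N k)) : Set (ℕ → ℂ)),
              sNorm q (ξ - η) < ε} := by
  obtain ⟨ξ₀, hξ₀⟩ : E.Nonempty :=
    Set.nonempty_iff_ne_empty.2 fun h => hinfdim ⟨∅, h ▸ Set.empty_subset _⟩
  let A : NonUnitalStarSubalgebra ℂ (ℕ → ℂ) :=
    { carrier := E
      add_mem' := fun hξ hη => hadd _ hξ _ hη
      zero_mem' := by simpa using hsmul 0 ξ₀ hξ₀
      mul_mem' := fun hξ hη => hmul _ hξ _ hη
      smul_mem' := fun c _ hξ => hsmul c _ hξ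
      star_mem' := fun hξ => hstar _ hξ }
  obtain ⟨N, hne, hdisj, hNE, hEN⟩ := exists_classes_enumeration (A := A) hEsub hclosed hinfdim
  have hspan : Submodule.span ℂ (Set.range fun k => eNset (N k)) ≤
      A.toNonUnitalSubalgebra.toSubmodule :=
    Submodule.span_le.2 (Set.range_subset_iff.2 hNE)
  have happrox := fun ξ (hξ : inS ξ) (h : _ ∧ _) =>
    exists_tendsto_sNorm_sub_mem_span hdisj hξ h.1 h.2
  refine ⟨N, hne, hdisj, Set.Subset.antisymm (fun ξ hξ => ⟨hEsub ξ hξ, hEN ξ hξ⟩) ?_, hNE,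
    Set.Subset.antisymm (fun ξ hξ => ⟨hEsub ξ hξ, fun q ε hε => ?_⟩) ?_⟩
  · rintro ξ ⟨hξ, hN⟩
    obtain ⟨η, hη, hlim⟩ := happrox ξ hξ hN
    exact IsSClosed.mem_of_tendsto hclosed hξ (fun n => hspan (hη n)) hlim
  · obtain ⟨η, hη, hlim⟩ := happrox ξ (hEsub ξ hξ) (hEN ξ hξ)
    obtain ⟨n, hn⟩ := ((hlim q).eventually (gt_mem_nhds hε)).exists
    exact ⟨η n, hη n, hn⟩
  · rintro ξ ⟨hξ, happ⟩
    exact hclosed ξ hξ fun q ε hε =>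
      let ⟨η, hη, hlt⟩ := happ q ε hε
      ⟨η, hspan hη, hlt⟩

end
end

section
/- Let (f_j)_{j∈ℕ} be an orthonormal sequence in ℓ₂(ℕ,ℂ) with each f_j ∈ s, and let (N_k)_{k∈ℕ} be a family of finite nonempty pairwise disjoint subsets of ℕ. Then for every q ∈ ℕ₀ there exists r ∈ ℕ₀ such that ∑_{k=1}^∞ (max_{j∈N_k} |f_j|_q) / (max_{j∈N_k} |f_j|_r) < ∞. -/
/-!
Choose in each `N k` an index `j k` maximizing `|f_j|_q`; the `g_k := f_{j k}` are again
orthonormal, and the ratio at `k` is at most `|g_k|_q / |g_k|_{q+3}`. Let `M_k` be the least `M`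
such that the first `M` coordinates of `g_k` carry more than half of its `ℓ₂` mass. At least half
of the mass then sits at indices `≥ M_k - 1`, so `|g_k|_{q+3} ≳ M_k^{q+3}`, while splitting the sum
for `|g_k|_q` at `M_k` gives `|g_k|_q ≲ M_k^q + M_k^{-3} |g_k|_{q+3}`; together
`|g_k|_q / |g_k|_{q+3} ≤ 2 / M_k^3`. By Bessel's inequality applied to the unit vectors `e_m`,
`m < M`, at most `2M` of the `g_k` have `M_k = M`, and `∑_M 2M · 2 / M^3 < ∞`.
-/

noncomputable section

open Finset

lemma pow_mul_pow_le_pow_add_add_pow_add {a x : ℝ} (ha : 0 ≤ a) (hx : 0 ≤ x) (m n : ℕ) :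
    a ^ m * x ^ n ≤ x ^ (m + n) + a ^ (m + n) := by
  rcases le_total a x with hax | hxa
  · calc a ^ m * x ^ n ≤ x ^ m * x ^ n := by gcongr
      _ = x ^ (m + n) := (pow_add x m n).symm
      _ ≤ x ^ (m + n) + a ^ (m + n) := le_add_of_nonneg_right (by positivity)
  · calc a ^ m * x ^ n ≤ a ^ m * a ^ n := by gcongr
      _ = a ^ (m + n) := (pow_add a m n).symm
      _ ≤ x ^ (m + n) + a ^ (m + n) := le_add_of_nonneg_left (by positivity)

section SNorm

variable {ξ : ℕ → ℂ}

lemma sNorm_nonneg (q : ℕ) (ξ : ℕ → ℂ) : 0 ≤ sNorm q ξ :=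
  Real.sqrt_nonneg _

lemma sNorm_sq (q : ℕ) (ξ : ℕ → ℂ) :
    sNorm q ξ ^ 2 = ∑' j : ℕ, ‖ξ j‖ ^ 2 * ((j : ℝ) + 1) ^ (2 * q) :=
  Real.sq_sqrt (tsum_nonneg fun _ => by positivity)

lemma sNorm_zero_sq (ξ : ℕ → ℂ) : sNorm 0 ξ ^ 2 = ∑' j, ‖ξ j‖ ^ 2 := by
  simp [sNorm_sq]

lemma sNorm_zero_eq_one (h : ∑' j, starRingEnd ℂ (ξ j) * ξ j = 1) : sNorm 0 ξ = 1 := by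
  have hsq : ((sNorm 0 ξ ^ 2 : ℝ) : ℂ) = 1 := by
    rw [sNorm_zero_sq, Complex.ofReal_tsum, ← h]
    exact tsum_congr fun j => by rw [Complex.conj_mul']; push_cast; rfl
  exact (pow_eq_one_iff_of_nonneg (sNorm_nonneg 0 ξ) two_ne_zero).1 (by exact_mod_cast hsq)

lemma inS.summable_sq (hξ : inS ξ) : Summable fun j => ‖ξ j‖ ^ 2 := by
  simpa using hξ 0

lemma sNorm_mono (hξ : inS ξ) {p q : ℕ} (hpq : p ≤ q) : sNorm p ξ ≤ sNorm q ξ := by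
  refine Real.sqrt_le_sqrt (Summable.tsum_le_tsum (fun j => ?_) (hξ p) (hξ q))
  gcongr
  exact le_add_of_nonneg_left j.cast_nonneg

lemma sNorm_pos (hξ : inS ξ) (hunit : sNorm 0 ξ = 1) (r : ℕ) : 0 < sNorm r ξ := by
  linarith [sNorm_mono hξ (Nat.zero_le r)]

/-- Termwise, `(j+1)^{2q} x^{2p}` is below `x^{2(q+p)}` or `(j+1)^{2(q+p)}`. -/
lemma sNorm_sq_mul_pow_le (hξ : inS ξ) (q p : ℕ) {x : ℝ} (hx : 0 ≤ x) :
    sNorm q ξ ^ 2 * x ^ (2 * p) ≤ x ^ (2 * (q + p)) * sNorm 0 ξ ^ 2 + sNorm (q + p) ξ ^ 2 := by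
  rw [sNorm_sq, sNorm_zero_sq, sNorm_sq, ← tsum_mul_right, ← tsum_mul_left,
    ← Summable.tsum_add (hξ.summable_sq.mul_left _) (hξ _)]
  refine Summable.tsum_le_tsum (fun j => ?_) ((hξ q).mul_right _)
    ((hξ.summable_sq.mul_left _).add (hξ _))
  have h := pow_mul_pow_le_pow_add_add_pow_add (by positivity : (0 : ℝ) ≤ j + 1) hx (2 * q) (2 * p)
  rw [← mul_add] at h
  calc ‖ξ j‖ ^ 2 * ((j : ℝ) + 1) ^ (2 * q) * x ^ (2 * p)
      = ‖ξ j‖ ^ 2 * (((j : ℝ) + 1) ^ (2 * q) * x ^ (2 * p)) := mul_assoc _ _ _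
    _ ≤ ‖ξ j‖ ^ 2 * (x ^ (2 * (q + p)) + ((j : ℝ) + 1) ^ (2 * (q + p))) := by gcongr
    _ = _ := by ring

lemma pow_mul_sub_sum_range_le_sNorm_sq (hξ : inS ξ) (r n : ℕ) {x : ℝ} (hx₀ : 0 ≤ x)
    (hx : x ≤ n + 1) :
    x ^ (2 * r) * (sNorm 0 ξ ^ 2 - ∑ m ∈ range n, ‖ξ m‖ ^ 2) ≤ sNorm r ξ ^ 2 := by
  have htail : sNorm 0 ξ ^ 2 - ∑ m ∈ range n, ‖ξ m‖ ^ 2 = ∑' m, ‖ξ (m + n)‖ ^ 2 := by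
    rw [sNorm_zero_sq, ← hξ.summable_sq.sum_add_tsum_nat_add n, add_sub_cancel_left]
  have hle : ∑' m, ‖ξ (m + n)‖ ^ 2 * (((m + n : ℕ) : ℝ) + 1) ^ (2 * r) ≤ sNorm r ξ ^ 2 := by
    rw [sNorm_sq, ← (hξ r).sum_add_tsum_nat_add n]
    exact le_add_of_nonneg_left (sum_nonneg fun _ _ => by positivity)
  rw [htail, ← tsum_mul_left]
  refine le_trans (Summable.tsum_le_tsum (fun m => ?_)
    (((summable_nat_add_iff n).2 hξ.summable_sq).mul_left _)
    ((summable_nat_add_iff n).2 (hξ r))) hle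
  rw [mul_comm]
  gcongr
  push_cast
  linarith [m.cast_nonneg (α := ℝ)]

end SNorm

section HalfMassIndex

variable {ξ : ℕ → ℂ}

def halfMassIndex (ξ : ℕ → ℂ) : ℕ :=
  sInf {n | 1 / 2 < ∑ m ∈ range n, ‖ξ m‖ ^ 2}

lemma half_lt_sum_range_halfMassIndex (hξ : Summable fun m => ‖ξ m‖ ^ 2)
    (hunit : sNorm 0 ξ = 1) :
    1 / 2 < ∑ m ∈ range (halfMassIndex ξ), ‖ξ m‖ ^ 2 := by
  have hsum : HasSum (fun m => ‖ξ m‖ ^ 2) 1 := by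
    simpa [← sNorm_zero_sq, hunit] using hξ.hasSum
  exact Nat.sInf_mem ((hsum.tendsto_sum_nat.eventually_const_lt (by norm_num)).exists)

lemma sum_range_le_half_of_lt_halfMassIndex {n : ℕ} (hn : n < halfMassIndex ξ) :
    ∑ m ∈ range n, ‖ξ m‖ ^ 2 ≤ 1 / 2 :=
  not_lt.1 (Nat.notMem_of_lt_sInf hn)

lemma halfMassIndex_pos (hξ : Summable fun m => ‖ξ m‖ ^ 2) (hunit : sNorm 0 ξ = 1) :
    0 < halfMassIndex ξ :=
  Nat.pos_of_ne_zero fun h => by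
    have hmass := half_lt_sum_range_halfMassIndex hξ hunit
    rw [h] at hmass
    norm_num at hmass

lemma halfMassIndex_pow_le_two_mul_sNorm_sq (hξ : inS ξ) (hunit : sNorm 0 ξ = 1) (r : ℕ) :
    (halfMassIndex ξ : ℝ) ^ (2 * r) ≤ 2 * sNorm r ξ ^ 2 := by
  have hM := halfMassIndex_pos hξ.summable_sq hunit
  have hhead := sum_range_le_half_of_lt_halfMassIndex (ξ := ξ) (Nat.sub_one_lt hM.ne')
  have hbound := pow_mul_sub_sum_range_le_sNorm_sq hξ r (halfMassIndex ξ - 1)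
    (x := halfMassIndex ξ) (Nat.cast_nonneg _) (by rw [Nat.cast_pred hM]; simp)
  rw [hunit] at hbound
  nlinarith [pow_nonneg (Nat.cast_nonneg (halfMassIndex ξ) : (0 : ℝ) ≤ halfMassIndex ξ) (2 * r)]

lemma sNorm_mul_halfMassIndex_pow_le (hξ : inS ξ) (hunit : sNorm 0 ξ = 1) (q : ℕ) :
    sNorm q ξ * (halfMassIndex ξ : ℝ) ^ 3 ≤ 2 * sNorm (q + 3) ξ := by
  have hsplit := sNorm_sq_mul_pow_le hξ q 3 (Nat.cast_nonneg (halfMassIndex ξ))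
  have hlow := halfMassIndex_pow_le_two_mul_sNorm_sq hξ hunit (q + 3)
  rw [hunit, one_pow, mul_one] at hsplit
  rw [← pow_le_pow_iff_left₀ (mul_nonneg (sNorm_nonneg _ _) (by positivity))
    (mul_nonneg zero_le_two (sNorm_nonneg _ _)) two_ne_zero]
  calc (sNorm q ξ * (halfMassIndex ξ : ℝ) ^ 3) ^ 2
      = sNorm q ξ ^ 2 * (halfMassIndex ξ : ℝ) ^ (2 * 3) := by ring
    _ ≤ 3 * sNorm (q + 3) ξ ^ 2 := by linarith
    _ ≤ (2 * sNorm (q + 3) ξ) ^ 2 := by nlinarith [sq_nonneg (sNorm (q + 3) ξ)]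

lemma sNorm_div_sNorm_add_three_le (hξ : inS ξ) (hunit : sNorm 0 ξ = 1) (q : ℕ) :
    sNorm q ξ / sNorm (q + 3) ξ ≤ 2 * ((halfMassIndex ξ : ℝ) ^ 3)⁻¹ := by
  have hM : (0 : ℝ) < (halfMassIndex ξ : ℝ) ^ 3 := by
    have := halfMassIndex_pos hξ.summable_sq hunit
    positivity
  rw [div_le_iff₀ (sNorm_pos hξ hunit _), ← div_eq_mul_inv, div_mul_eq_mul_div, le_div_iff₀ hM]
  exact sNorm_mul_halfMassIndex_pow_le hξ hunit q

end HalfMassIndex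

section Orthonormal

variable {ι : Type*} [DecidableEq ι] {g : ι → ℕ → ℂ}

/-- Bessel's inequality for the family `g` tested against the unit vector `e_m`. -/
lemma sum_sq_norm_apply_le_one (hg : ∀ k, Summable fun m => ‖g k m‖ ^ 2)
    (hon : ∀ k l, ∑' m, starRingEnd ℂ (g k m) * g l m = if k = l then 1 else 0)
    (B : Finset ι) (m : ℕ) :
    ∑ k ∈ B, ‖g k m‖ ^ 2 ≤ 1 := by
  let G : ι → lp (fun _ : ℕ => ℂ) 2 := fun k =>
    ⟨g k, (memℓp_gen_iff (by norm_num)).2 (by simpa using hg k)⟩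
  have hG : Orthonormal ℂ G := by
    rw [orthonormal_iff_ite]
    intro k l
    rw [lp.inner_eq_tsum, ← hon k l]
    exact tsum_congr fun i => mul_comm _ _
  let e : lp (fun _ : ℕ => ℂ) 2 := lp.single 2 m 1
  have he : ‖e‖ = 1 := by
    rw [lp.norm_single (by norm_num)]
    exact norm_one
  calc ∑ k ∈ B, ‖g k m‖ ^ 2 = ∑ k ∈ B, ‖inner ℂ (G k) e‖ ^ 2 := by
        refine sum_congr rfl fun k _ => ?_
        simp [e, G, lp.inner_single_right]
    _ ≤ ‖e‖ ^ 2 := hG.sum_inner_products_le e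
    _ = 1 := by rw [he, one_pow]

lemma card_le_of_halfMassIndex_eq (hg : ∀ k, Summable fun m => ‖g k m‖ ^ 2)
    (hon : ∀ k l, ∑' m, starRingEnd ℂ (g k m) * g l m = if k = l then 1 else 0)
    (S : Finset ι) (n : ℕ) (hS : ∀ k ∈ S, halfMassIndex (g k) = n) :
    #S ≤ 2 * n := by
  have hmass : ∀ k ∈ S, 1 / 2 ≤ ∑ m ∈ range n, ‖g k m‖ ^ 2 := fun k hk =>
    hS k hk ▸ (half_lt_sum_range_halfMassIndex (hg k) (sNorm_zero_eq_one (by simp [hon]))).le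
  have hcard : (#S : ℝ) * (1 / 2) ≤ n :=
    calc (#S : ℝ) * (1 / 2) ≤ ∑ k ∈ S, ∑ m ∈ range n, ‖g k m‖ ^ 2 := by
          simpa using card_nsmul_le_sum S _ _ hmass
      _ = ∑ m ∈ range n, ∑ k ∈ S, ‖g k m‖ ^ 2 := sum_comm
      _ ≤ ∑ _m ∈ range n, (1 : ℝ) := sum_le_sum fun m _ => sum_sq_norm_apply_le_one hg hon S m
      _ = n := by simp
  exact_mod_cast (by linarith : (#S : ℝ) ≤ 2 * n)

end Orthonormal

lemma summable_inv_pow_three_of_card_fiber_le {ι : Type*} (M : ι → ℕ) (d : ℕ)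
    (h : ∀ (F : Finset ι) (n : ℕ), #{k ∈ F | M k = n} ≤ d * n) :
    Summable fun k => ((M k : ℝ) ^ 3)⁻¹ := by
  refine summable_of_sum_le (c := d * ∑' n : ℕ, ((n : ℝ) ^ 2)⁻¹) (fun k => by positivity)
    fun F => ?_
  have hfiber : ∀ n, (#{k ∈ F | M k = n} : ℝ) * ((n : ℝ) ^ 3)⁻¹ ≤ d * ((n : ℝ) ^ 2)⁻¹ := by
    intro n
    calc (#{k ∈ F | M k = n} : ℝ) * ((n : ℝ) ^ 3)⁻¹ ≤ (d * n : ℕ) * ((n : ℝ) ^ 3)⁻¹ := by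
          gcongr; exact h F n
      _ = d * ((n : ℝ) ^ 2)⁻¹ := by
          rcases eq_or_ne n 0 with rfl | hn
          · simp
          · push_cast; field_simp
  calc ∑ k ∈ F, ((M k : ℝ) ^ 3)⁻¹
      = ∑ n ∈ F.image M, (#{k ∈ F | M k = n} : ℝ) * ((n : ℝ) ^ 3)⁻¹ := by
        rw [← sum_fiberwise_of_maps_to (fun k hk => mem_image_of_mem M hk)]
        refine sum_congr rfl fun n _ => ?_
        rw [sum_congr rfl fun k hk => by rw [(mem_filter.1 hk).2], sum_const, nsmul_eq_mul]
    _ ≤ ∑ n ∈ F.image M, d * ((n : ℝ) ^ 2)⁻¹ := sum_le_sum fun n _ => hfiber n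
    _ ≤ d * ∑' n : ℕ, ((n : ℝ) ^ 2)⁻¹ := by
        rw [← mul_sum]
        gcongr
        exact Summable.sum_le_tsum _ (fun _ _ => by positivity)
          (Real.summable_nat_pow_inv.2 one_lt_two)

/-- Let `(f_j)` be an orthonormal sequence in `ℓ₂` with each `f_j ∈ s` and `(N_k)` finite
nonempty pairwise disjoint subsets of `ℕ`. Then for every `q` there is `r` with
`∑_k (max_{j ∈ N_k} |f_j|_q) / (max_{j ∈ N_k} |f_j|_r) < ∞`. -/
theorem stmt_12 (f : ℕ → ℕ → ℂ) (hfs : ∀ j, inS (f j))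
    (hon : ∀ i j : ℕ,
      (∑' m : ℕ, (starRingEnd ℂ) (f i m) * f j m) = if i = j then 1 else 0)
    (N : ℕ → Finset ℕ) (hne : ∀ k, (N k).Nonempty)
    (hdisj : ∀ k l, k ≠ l → Disjoint (N k) (N l)) :
    ∀ q : ℕ, ∃ r : ℕ,
      Summable fun k : ℕ =>
        ((N k).sup' (hne k) fun j => sNorm q (f j)) /
          ((N k).sup' (hne k) fun j => sNorm r (f j)) := by
  intro q
  refine ⟨q + 3, ?_⟩
  choose jmax hjmem hjmax using fun k => exists_mem_eq_sup' (hne k) fun j => sNorm q (f j)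
  have hinj : Function.Injective jmax := fun k l hkl => by
    by_contra hkl'
    exact disjoint_left.1 (hdisj k l hkl') (hjmem k) (hkl ▸ hjmem l)
  set g := fun k => f (jmax k)
  have hgon : ∀ k l, ∑' m, starRingEnd ℂ (g k m) * g l m = if k = l then 1 else 0 :=
    fun k l => by simpa [g, hinj.eq_iff] using hon (jmax k) (jmax l)
  have hunit : ∀ k, sNorm 0 (g k) = 1 := fun k => sNorm_zero_eq_one (by simp [hgon])
  have hfiber : ∀ F n, #{k ∈ F | halfMassIndex (g k) = n} ≤ 2 * n := fun F n =>
    card_le_of_halfMassIndex_eq (fun k => (hfs _).summable_sq) hgon _ n fun _ hk =>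
      (mem_filter.1 hk).2
  refine Summable.of_nonneg_of_le (fun k => ?_) (fun k => ?_)
    ((summable_inv_pow_three_of_card_fiber_le _ 2 hfiber).mul_left 2)
  all_goals
    have hr := sNorm_pos (hfs _) (hunit k) (q + 3)
    have hsup := le_sup' (fun j => sNorm (q + 3) (f j)) (hjmem k)
    rw [hjmax k]
  · exact div_nonneg (sNorm_nonneg _ _) (hr.le.trans hsup)
  · exact (div_le_div_of_nonneg_left (sNorm_nonneg _ _) hr hsup).trans
      (sNorm_div_sNorm_add_three_le (hfs _) (hunit k) q)

end
end
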